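/- No probabilistic finite state transducer computes the relation R₄ = {(0^m 1^n a, 4^l) : a∈{2,3}, (a=2 → l=m) and (a=3 → l=n)} ⊆ {0,1,2,3}*×{4}* with probability bounded away from 1/2, i.e., there is no pfst T and no δ>0 such that T computes R₄ with probability 1/2+δ. -/

import Mathlib

/-!  Probabilistic finite state transducers (pfst), following
Freivalds & Winter, "Quantum Finite State Transducers". -/

section PFSTdefs

variable {Q Γ₁ Γ₂ : Type*}

/-- A probabilistic finite state transducer: a finite state set `Q`, input
alphabet `Γ₁` (with implicit begin/end markers `‡`,`$`), output alphabet `Γ₂`,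
row-stochastic transition matrices for every letter and for the two markers,
output functions, an initial state, and disjoint sets of accepting and
rejecting states.  The end-marker matrix carries all probability from
non-halting states into `acc ∪ rej`. -/
structure PFST (Q Γ₁ Γ₂ : Type*) [Fintype Q] [DecidableEq Q] where
  V : Γ₁ → Matrix Q Q ℝ
  Vbeg : Matrix Q Q ℝ
  Vend : Matrix Q Q ℝ
  out : Γ₁ → Q → List Γ₂
  outBeg : Q → List Γ₂
  outEnd : Q → List Γ₂
  init : Q
  acc : Finset Q
  rej : Finset Q
  acc_disj_rej : Disjoint acc rej
  nonneg : ∀ a q p, 0 ≤ V a q p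
  nonnegBeg : ∀ q p, 0 ≤ Vbeg q p
  nonnegEnd : ∀ q p, 0 ≤ Vend q p
  stochastic : ∀ a q, ∑ p, V a q p = 1
  stochasticBeg : ∀ q, ∑ p, Vbeg q p = 1
  stochasticEnd : ∀ q, ∑ p, Vend q p = 1
  endHalts : ∀ q, q ∉ acc → q ∉ rej → ∀ p, p ∉ acc → p ∉ rej → Vend q p = 0

variable [DecidableEq Γ₂]

/-- Probability that, starting from the (non-halting) state `q`, reading the
remaining list of computation steps (each step being a transition matrix
together with an output function), the machine eventually halts in an
accepting state having produced in total exactly the output word `w`.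
In each step, being in state `q`, the word `s.2 q` is appended to the output
tape and the state moves to `p` with probability `s.1 q p`; the computation
halts as soon as an accepting or rejecting state is entered. -/
def pAccAux (acc non : Finset Q) :
    List (Matrix Q Q ℝ × (Q → List Γ₂)) → Q → List Γ₂ → ℝ
  | [], _, _ => 0
  | s :: rest, q, w =>
      if s.2 q <+: w then
        (∑ p ∈ acc, s.1 q p) * (if w.drop (s.2 q).length = [] then 1 else 0)
          + ∑ p ∈ non, s.1 q p * pAccAux acc non rest p (w.drop (s.2 q).length)
      else 0

variable [Fintype Q] [DecidableEq Q]

/-- The list of computation steps on input `‡ v $`. -/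
def PFST.steps (T : PFST Q Γ₁ Γ₂) (v : List Γ₁) :
    List (Matrix Q Q ℝ × (Q → List Γ₂)) :=
  (T.Vbeg, T.outBeg) :: (v.map fun a => (T.V a, T.out a)) ++ [(T.Vend, T.outEnd)]

/-- `T.prob v w` : the probability that on input `‡ v $` the transducer halts
accepting, with exactly `w` written on the output tape. -/
def PFST.prob (T : PFST Q Γ₁ Γ₂) (v : List Γ₁) (w : List Γ₂) : ℝ :=
  pAccAux T.acc (Finset.univ \ (T.acc ∪ T.rej)) (T.steps v) T.init w

/-- `T` computes the relation `R` with probability `α`. -/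
def PFST.Computes (T : PFST Q Γ₁ Γ₂) (R : Set (List Γ₁ × List Γ₂)) (α : ℝ) : Prop :=
  ∀ v w, ((v, w) ∈ R → α ≤ T.prob v w) ∧ ((v, w) ∉ R → T.prob v w ≤ 1 - α)

/-- `T` computes the relation `R` with isolated cutpoint `α`. -/
def PFST.ComputesCutpoint (T : PFST Q Γ₁ Γ₂) (R : Set (List Γ₁ × List Γ₂)) (α : ℝ) : Prop :=
  ∃ ε > 0, ∀ v w, ((v, w) ∈ R → α + ε ≤ T.prob v w) ∧ ((v, w) ∉ R → T.prob v w ≤ α - ε)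

/-- A deterministic finite state transducer: all transition probabilities
are `0` or `1`. -/
def PFST.IsDeterministic (T : PFST Q Γ₁ Γ₂) : Prop :=
  (∀ a q p, T.V a q p = 0 ∨ T.V a q p = 1) ∧
  (∀ q p, T.Vbeg q p = 0 ∨ T.Vbeg q p = 1) ∧
  (∀ q p, T.Vend q p = 0 ∨ T.Vend q p = 1)

end PFSTdefs

/-- The relation
`R₄ = {(0^m 1^n a, 4^l) : a ∈ {2,3}, (a = 2 → l = m) ∧ (a = 3 → l = n)}`
`⊆ {0,1,2,3}* × {4}*` (the output symbol `4` being represented inside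
`Fin 5`). -/
def R₄ : Set (List (Fin 4) × List (Fin 5)) :=
  {p | ∃ (m n l : ℕ) (a : Fin 4), (a = 2 ∨ a = 3) ∧
    (a = 2 → l = m) ∧ (a = 3 → l = n) ∧
    p.1 = List.replicate m 0 ++ List.replicate n 1 ++ [a] ∧
    p.2 = List.replicate l 4}

section AuxLemmas
set_option linter.unusedSectionVars false

variable {Q Γ₂ : Type*} [DecidableEq Γ₂] [Fintype Q] [DecidableEq Q]

/-- Probability of, starting in `q`, traversing the whole list of steps
without halting, ending in state `p` with output `u`. -/
def runAux (non : Finset Q) :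
    List (Matrix Q Q ℝ × (Q → List Γ₂)) → Q → Q → List Γ₂ → ℝ
  | [], q, p, u => if p = q ∧ u = [] then 1 else 0
  | s :: rest, q, p, u =>
      if s.2 q <+: u then
        ∑ r ∈ non, s.1 q r * runAux non rest r p (u.drop (s.2 q).length)
      else 0

lemma pAccAux_nonneg (acc non : Finset Q) :
    ∀ (L : List (Matrix Q Q ℝ × (Q → List Γ₂))),
      (∀ s ∈ L, ∀ q p, 0 ≤ s.1 q p) → ∀ q w, 0 ≤ pAccAux acc non L q w
  | [], _, q, w => le_refl 0
  | s :: rest, h, q, w => by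
    rw [pAccAux]
    split
    · have h1 : ∀ s' ∈ rest, ∀ q p, 0 ≤ s'.1 q p := fun s' hs' => h s' (List.mem_cons_of_mem _ hs')
      have hs : ∀ q p, 0 ≤ s.1 q p := h s (List.mem_cons_self)
      apply add_nonneg
      · apply mul_nonneg (Finset.sum_nonneg fun p _ => hs q p)
        split <;> norm_num
      · exact Finset.sum_nonneg fun p _ => mul_nonneg (hs q p)
          (pAccAux_nonneg acc non rest h1 p _)
    · exact le_refl 0

lemma runAux_nonneg (non : Finset Q) :
    ∀ (L : List (Matrix Q Q ℝ × (Q → List Γ₂))),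
      (∀ s ∈ L, ∀ q p, 0 ≤ s.1 q p) → ∀ q p u, 0 ≤ runAux non L q p u
  | [], _, q, p, u => by rw [runAux]; split <;> norm_num
  | s :: rest, h, q, p, u => by
    rw [runAux]
    split
    · exact Finset.sum_nonneg fun r _ => mul_nonneg (h s (List.mem_cons_self) q r)
        (runAux_nonneg non rest (fun s' hs' => h s' (List.mem_cons_of_mem _ hs')) r p _)
    · exact le_refl 0

end AuxLemmas
section AuxLemmas2
set_option linter.unusedSectionVars false

variable {Q Γ₂ : Type*} [DecidableEq Γ₂] [Fintype Q] [DecidableEq Q]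

lemma pAccAux_append (acc non : Finset Q) :
    ∀ (L₁ L₂ : List (Matrix Q Q ℝ × (Q → List Γ₂))) (q : Q) (w : List Γ₂),
    pAccAux acc non (L₁ ++ L₂) q w
      = pAccAux acc non L₁ q w
        + ∑ k ∈ Finset.range (w.length + 1), ∑ p : Q,
            runAux non L₁ q p (w.take k) * pAccAux acc non L₂ p (w.drop k)
  | [], L₂, q, w => by
    rw [List.nil_append]
    have h0 : ∀ k ∈ Finset.range (w.length + 1), (∑ p : Q,
        runAux non [] q p (w.take k) * pAccAux acc non L₂ p (w.drop k))
        = if w.take k = [] then pAccAux acc non L₂ q (w.drop k) else 0 := by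
      intro k _
      rw [Finset.sum_eq_single q]
      · rw [runAux]
        by_cases h : w.take k = [] <;> simp [h]
      · intro p _ hp
        rw [runAux]
        simp [hp]
      · simp
    rw [Finset.sum_congr rfl h0]
    rcases w with _ | ⟨x, t⟩
    · simp [pAccAux]
    · have h1 : ∀ k, (x :: t).take k = [] ↔ k = 0 := by
        intro k; cases k <;> simp
      rw [Finset.sum_congr rfl (fun k _ => by rw [if_congr (h1 k) rfl rfl])]
      rw [Finset.sum_ite_eq' (Finset.range ((x :: t).length + 1)) 0
        (fun k => pAccAux acc non L₂ q ((x :: t).drop k))]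
      simp [pAccAux]
  | s :: rest, L₂, q, w => by
    rw [List.cons_append, pAccAux, pAccAux]
    by_cases hpre : s.2 q <+: w
    · rw [if_pos hpre, if_pos hpre]
      set d := (s.2 q).length with hd
      have hdw : d ≤ w.length := hpre.length_le
      -- rewrite the runAux sum
      have hsum : (∑ k ∈ Finset.range (w.length + 1), ∑ p : Q,
            runAux non (s :: rest) q p (w.take k) * pAccAux acc non L₂ p (w.drop k))
          = ∑ r ∈ non, s.1 q r * ∑ k ∈ Finset.range ((w.drop d).length + 1), ∑ p : Q,
              runAux non rest r p ((w.drop d).take k) * pAccAux acc non L₂ p ((w.drop d).drop k) := by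
        have hsplit : Finset.range (w.length + 1) = Finset.Ico 0 d ∪ Finset.Ico d (w.length + 1) := by
          rw [Finset.range_eq_Ico, Finset.Ico_union_Ico_eq_Ico (Nat.zero_le d) (by omega)]
        rw [hsplit, Finset.sum_union (Finset.Ico_disjoint_Ico_consecutive 0 d (w.length + 1))]
        have h1 : ∀ k ∈ Finset.Ico 0 d, (∑ p : Q,
            runAux non (s :: rest) q p (w.take k) * pAccAux acc non L₂ p (w.drop k)) = 0 := by
          intro k hk
          rw [Finset.mem_Ico] at hk
          apply Finset.sum_eq_zero
          intro p _
          rw [runAux, if_neg, zero_mul]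
          rw [List.prefix_take_iff]
          rintro ⟨-, hlen⟩
          exact Nat.not_lt.mpr hlen (hd ▸ hk.2)
        rw [Finset.sum_congr rfl h1, Finset.sum_const_zero, zero_add]
        have h2 : ∀ k ∈ Finset.Ico d (w.length + 1), (∑ p : Q,
            runAux non (s :: rest) q p (w.take k) * pAccAux acc non L₂ p (w.drop k))
            = ∑ p : Q, (∑ r ∈ non, s.1 q r * runAux non rest r p ((w.drop d).take (k - d)))
                * pAccAux acc non L₂ p ((w.drop d).drop (k - d)) := by
          intro k hk
          rw [Finset.mem_Ico] at hk
          apply Finset.sum_congr rfl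
          intro p _
          rw [runAux, if_pos (List.prefix_take_iff.2 ⟨hpre, hd ▸ hk.1⟩)]
          rw [List.drop_take, List.drop_drop]
          congr 3
          have := hk.1
          omega
        rw [Finset.sum_congr rfl h2, Finset.sum_Ico_eq_sum_range]
        have hlen : w.length + 1 - d = (w.drop d).length + 1 := by
          rw [List.length_drop]; omega
        rw [hlen]
        simp only [Nat.add_sub_cancel_left]
        calc ∑ k ∈ Finset.range ((w.drop d).length + 1), ∑ p : Q,
              (∑ r ∈ non, s.1 q r * runAux non rest r p ((w.drop d).take k))
                * pAccAux acc non L₂ p ((w.drop d).drop k)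
            = ∑ k ∈ Finset.range ((w.drop d).length + 1), ∑ r ∈ non, ∑ p : Q,
                s.1 q r * (runAux non rest r p ((w.drop d).take k)
                  * pAccAux acc non L₂ p ((w.drop d).drop k)) := by
              refine Finset.sum_congr rfl fun k _ => ?_
              rw [← Finset.sum_comm]
              refine Finset.sum_congr rfl fun p _ => ?_
              rw [Finset.sum_mul]
              exact Finset.sum_congr rfl fun r _ => by ring
          _ = ∑ r ∈ non, s.1 q r * ∑ k ∈ Finset.range ((w.drop d).length + 1), ∑ p : Q,
                runAux non rest r p ((w.drop d).take k)
                  * pAccAux acc non L₂ p ((w.drop d).drop k) := by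
              rw [Finset.sum_comm]
              refine Finset.sum_congr rfl fun r _ => ?_
              rw [Finset.mul_sum]
              exact Finset.sum_congr rfl fun k _ => by rw [Finset.mul_sum]
      rw [hsum]
      have hIH : ∀ r, pAccAux acc non (rest ++ L₂) r (w.drop d)
          = pAccAux acc non rest r (w.drop d)
            + ∑ k ∈ Finset.range ((w.drop d).length + 1), ∑ p : Q,
                runAux non rest r p ((w.drop d).take k) * pAccAux acc non L₂ p ((w.drop d).drop k) :=
        fun r => pAccAux_append acc non rest L₂ r (w.drop d)
      have hLHS : (∑ r ∈ non, s.1 q r * pAccAux acc non (rest ++ L₂) r (w.drop d))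
          = (∑ r ∈ non, s.1 q r * pAccAux acc non rest r (w.drop d))
            + ∑ r ∈ non, s.1 q r * ∑ k ∈ Finset.range ((w.drop d).length + 1), ∑ p : Q,
                runAux non rest r p ((w.drop d).take k) * pAccAux acc non L₂ p ((w.drop d).drop k) := by
        rw [← Finset.sum_add_distrib]
        refine Finset.sum_congr rfl fun r _ => ?_
        rw [hIH r, mul_add]
      rw [hLHS, add_assoc]
    · rw [if_neg hpre, if_neg hpre, zero_add]
      symm
      apply Finset.sum_eq_zero
      intro k _
      apply Finset.sum_eq_zero
      intro p _
      rw [runAux, if_neg, zero_mul]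
      intro h
      exact hpre (h.trans (List.take_prefix k w))

end AuxLemmas2
section AuxLemmas3
set_option linter.unusedSectionVars false

variable {Q Γ₂ : Type*} [DecidableEq Γ₂] [Fintype Q] [DecidableEq Q]

/-- pAccAux vanishes on outputs longer than the total possible output. -/
lemma pAccAux_eq_zero_of_long (acc non : Finset Q) (B : ℕ) :
    ∀ (L : List (Matrix Q Q ℝ × (Q → List Γ₂))),
      (∀ s ∈ L, ∀ q, (s.2 q).length ≤ B) →
      ∀ q (w : List Γ₂), L.length * B < w.length → pAccAux acc non L q w = 0
  | [], _, q, w, _ => rfl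
  | s :: rest, h, q, w, hw => by
    rw [pAccAux]
    split
    · have hB : (s.2 q).length ≤ B := h s (List.mem_cons_self) q
      have hlen : rest.length * B < (w.drop (s.2 q).length).length := by
        rw [List.length_drop]
        simp only [List.length_cons] at hw
        have : (rest.length + 1) * B = rest.length * B + B := by ring
        omega
      have hne : w.drop (s.2 q).length ≠ [] := by
        intro hnil
        rw [hnil] at hlen
        simp at hlen
      rw [if_neg hne, mul_zero, zero_add]
      apply Finset.sum_eq_zero
      intro p _
      rw [pAccAux_eq_zero_of_long acc non B rest
        (fun s' hs' => h s' (List.mem_cons_of_mem _ hs')) p _ hlen, mul_zero]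
    · rfl

/-- Total mass bound: the events "accepted with output `w`" (`w ∈ W`) and
"still running with output `u`" (`u ∈ U`) are pairwise disjoint, so their
probabilities sum to at most `1`. -/
lemma mass_le_one (acc non : Finset Q) (hdisj : Disjoint acc non) :
    ∀ (L : List (Matrix Q Q ℝ × (Q → List Γ₂))),
      (∀ s ∈ L, ∀ q p, 0 ≤ s.1 q p) → (∀ s ∈ L, ∀ q, ∑ p : Q, s.1 q p = 1) →
      ∀ (q : Q) (W U : Finset (List Γ₂)),
      (∑ w ∈ W, pAccAux acc non L q w) + ∑ u ∈ U, ∑ p : Q, runAux non L q p u ≤ 1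
  | [], _, _, q, W, U => by
    have h1 : ∀ w ∈ W, pAccAux acc non ([] : List (Matrix Q Q ℝ × (Q → List Γ₂))) q w = 0 :=
      fun w _ => rfl
    rw [Finset.sum_congr rfl h1, Finset.sum_const_zero, zero_add]
    have h2 : ∀ u ∈ U, (∑ p : Q, runAux non ([] : List (Matrix Q Q ℝ × (Q → List Γ₂))) q p u)
        = if u = [] then 1 else 0 := by
      intro u _
      rw [Finset.sum_eq_single q]
      · rw [runAux]; by_cases h : u = [] <;> simp [h]
      · intro p _ hp; rw [runAux]; simp [hp]
      · simp
    rw [Finset.sum_congr rfl h2, Finset.sum_ite_eq' U ([] : List Γ₂) (fun _ => (1 : ℝ))]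
    split <;> norm_num
  | s :: rest, hpos, hsum, q, W, U => by
    have hpos' : ∀ s' ∈ rest, ∀ q p, 0 ≤ s'.1 q p :=
      fun s' hs' => hpos s' (List.mem_cons_of_mem _ hs')
    have hsum' : ∀ s' ∈ rest, ∀ q, ∑ p : Q, s'.1 q p = 1 :=
      fun s' hs' => hsum s' (List.mem_cons_of_mem _ hs')
    have hspos : ∀ q p, 0 ≤ s.1 q p := hpos s (List.mem_cons_self)
    set d := (s.2 q).length with hd
    set W₁ := W.filter (fun w => s.2 q <+: w) with hW₁
    set U₁ := U.filter (fun u => s.2 q <+: u) with hU₁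
    have e1 : (∑ w ∈ W, pAccAux acc non (s :: rest) q w)
        = ∑ w ∈ W₁, ((∑ p ∈ acc, s.1 q p) * (if w.drop d = [] then 1 else 0)
            + ∑ p ∈ non, s.1 q p * pAccAux acc non rest p (w.drop d)) := by
      rw [hW₁, Finset.sum_filter]
      refine Finset.sum_congr rfl fun w _ => ?_
      rw [pAccAux]
    have e2 : (∑ u ∈ U, ∑ p : Q, runAux non (s :: rest) q p u)
        = ∑ u ∈ U₁, ∑ p : Q, ∑ r ∈ non, s.1 q r * runAux non rest r p (u.drop d) := by
      rw [hU₁, Finset.sum_filter]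
      refine Finset.sum_congr rfl fun u _ => ?_
      by_cases h : s.2 q <+: u
      · rw [if_pos h]
        refine Finset.sum_congr rfl fun p _ => ?_
        rw [runAux, if_pos h]
      · rw [if_neg h]
        apply Finset.sum_eq_zero
        intro p _
        rw [runAux, if_neg h]
    rw [e1, e2, Finset.sum_add_distrib]
    -- the acceptance part
    have hacc : (∑ w ∈ W₁, (∑ p ∈ acc, s.1 q p) * (if w.drop d = [] then 1 else 0))
        ≤ ∑ p ∈ acc, s.1 q p := by
      rw [← Finset.mul_sum]
      have hiff : (∑ w ∈ W₁, if w.drop d = [] then (1:ℝ) else 0)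
          = ∑ w ∈ W₁, if w = s.2 q then (1:ℝ) else 0 := by
        refine Finset.sum_congr rfl fun w hw => ?_
        rw [hW₁, Finset.mem_filter] at hw
        have hp := hw.2
        have hiff2 : w.drop d = [] ↔ w = s.2 q := by
          constructor
          · intro hnil
            obtain ⟨t, ht⟩ := hp
            rw [← ht] at hnil ⊢
            rw [hd, List.drop_left] at hnil
            rw [hnil, List.append_nil]
          · intro hw'
            rw [hw', hd, List.drop_length]
        rw [if_congr hiff2 rfl rfl]
      rw [hiff, Finset.sum_ite_eq' W₁ (s.2 q) (fun _ => (1:ℝ))]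
      have h01 : (if s.2 q ∈ W₁ then (1:ℝ) else 0) ≤ 1 := by split <;> norm_num
      calc (∑ p ∈ acc, s.1 q p) * (if s.2 q ∈ W₁ then (1:ℝ) else 0)
          ≤ (∑ p ∈ acc, s.1 q p) * 1 :=
            mul_le_mul_of_nonneg_left h01 (Finset.sum_nonneg fun p _ => hspos q p)
        _ = ∑ p ∈ acc, s.1 q p := mul_one _
    -- injectivity of `drop d` on sets of words having `s.2 q` as a prefix
    have hinj : ∀ {V₁ : Finset (List Γ₂)}, (∀ v ∈ V₁, s.2 q <+: v) →
        ∀ v₁ ∈ V₁, ∀ v₂ ∈ V₁, v₁.drop d = v₂.drop d → v₁ = v₂ := by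
      intro V₁ hV v₁ h₁ v₂ h₂ hdrop
      obtain ⟨t₁, ht₁⟩ := hV v₁ h₁
      obtain ⟨t₂, ht₂⟩ := hV v₂ h₂
      rw [← ht₁, ← ht₂, hd, List.drop_left, List.drop_left] at hdrop
      rw [← ht₁, ← ht₂, hdrop]
    have hWinj := hinj (V₁ := W₁) (fun v hv => (Finset.mem_filter.1 hv).2)
    have hUinj := hinj (V₁ := U₁) (fun v hv => (Finset.mem_filter.1 hv).2)
    have e3 : (∑ w ∈ W₁, ∑ p ∈ non, s.1 q p * pAccAux acc non rest p (w.drop d))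
        = ∑ r ∈ non, s.1 q r * ∑ w' ∈ W₁.image (List.drop d), pAccAux acc non rest r w' := by
      rw [Finset.sum_comm]
      refine Finset.sum_congr rfl fun r _ => ?_
      rw [Finset.sum_image hWinj, Finset.mul_sum]
    have e4 : (∑ u ∈ U₁, ∑ p : Q, ∑ r ∈ non, s.1 q r * runAux non rest r p (u.drop d))
        = ∑ r ∈ non, s.1 q r * ∑ u' ∈ U₁.image (List.drop d), ∑ p : Q, runAux non rest r p u' := by
      calc ∑ u ∈ U₁, ∑ p : Q, ∑ r ∈ non, s.1 q r * runAux non rest r p (u.drop d)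
          = ∑ u ∈ U₁, ∑ r ∈ non, s.1 q r * ∑ p : Q, runAux non rest r p (u.drop d) := by
            refine Finset.sum_congr rfl fun u _ => ?_
            rw [Finset.sum_comm]
            exact Finset.sum_congr rfl fun r _ => (Finset.mul_sum _ _ _).symm
        _ = ∑ r ∈ non, s.1 q r * ∑ u ∈ U₁, ∑ p : Q, runAux non rest r p (u.drop d) := by
            rw [Finset.sum_comm]
            exact Finset.sum_congr rfl fun r _ => (Finset.mul_sum _ _ _).symm
        _ = ∑ r ∈ non, s.1 q r * ∑ u' ∈ U₁.image (List.drop d), ∑ p : Q, runAux non rest r p u' := by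
            refine Finset.sum_congr rfl fun r _ => ?_
            rw [Finset.sum_image hUinj]
    rw [e3, e4, add_assoc]
    have hIH : ∀ r ∈ non, (∑ w' ∈ W₁.image (List.drop d), pAccAux acc non rest r w')
        + ∑ u' ∈ U₁.image (List.drop d), ∑ p : Q, runAux non rest r p u' ≤ 1 :=
      fun r _ => mass_le_one acc non hdisj rest hpos' hsum' r _ _
    calc (∑ w ∈ W₁, (∑ p ∈ acc, s.1 q p) * (if w.drop d = [] then 1 else 0))
          + ((∑ r ∈ non, s.1 q r * ∑ w' ∈ W₁.image (List.drop d), pAccAux acc non rest r w')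
            + ∑ r ∈ non, s.1 q r * ∑ u' ∈ U₁.image (List.drop d), ∑ p : Q, runAux non rest r p u')
        ≤ (∑ p ∈ acc, s.1 q p) + ∑ r ∈ non, s.1 q r := by
          apply add_le_add hacc
          rw [← Finset.sum_add_distrib]
          refine Finset.sum_le_sum fun r hr => ?_
          rw [← mul_add]
          calc s.1 q r * _ ≤ s.1 q r * 1 :=
                mul_le_mul_of_nonneg_left (hIH r hr) (hspos q r)
            _ = s.1 q r := mul_one _
      _ = ∑ p ∈ acc ∪ non, s.1 q p := (Finset.sum_union hdisj).symm
      _ ≤ ∑ p : Q, s.1 q p :=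
          Finset.sum_le_sum_of_subset_of_nonneg (Finset.subset_univ _)
            (fun p _ _ => hspos q p)
      _ = 1 := hsum s (List.mem_cons_self) q

lemma pAccAux_le_one (acc non : Finset Q) (hdisj : Disjoint acc non)
    (L : List (Matrix Q Q ℝ × (Q → List Γ₂)))
    (hpos : ∀ s ∈ L, ∀ q p, 0 ≤ s.1 q p) (hsum : ∀ s ∈ L, ∀ q, ∑ p : Q, s.1 q p = 1)
    (q : Q) (w : List Γ₂) : pAccAux acc non L q w ≤ 1 := by
  have := mass_le_one acc non hdisj L hpos hsum q {w} ∅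
  simpa using this

end AuxLemmas3
/-- No probabilistic finite state transducer computes `R₄` with probability
bounded away from `1/2`. -/
theorem no_pfst_computes_R₄ (Q : Type) [Fintype Q] [DecidableEq Q]
    (T : PFST Q (Fin 4) (Fin 5)) (δ : ℝ) (hδ : 0 < δ) :
    ¬ T.Computes R₄ (1/2 + δ) := by
  intro hcomp
  classical
  set non : Finset Q := Finset.univ \ (T.acc ∪ T.rej) with hnon
  have hdisj : Disjoint T.acc non := by
    rw [hnon]
    exact Finset.disjoint_left.mpr
      (fun q hq hq' => (Finset.mem_sdiff.1 hq').2 (Finset.mem_union_left _ hq))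
  set B : ℕ := Finset.univ.sup (fun q : Q => max (T.out 3 q).length (T.outEnd q).length) with hB
  set n : ℕ := 2 * B + 1 with hn
  set u : List (Fin 4) := List.replicate n 1 with hu
  set f : Fin 4 → Matrix Q Q ℝ × (Q → List (Fin 5)) := fun a => (T.V a, T.out a) with hf
  set L₁ : List (Matrix Q Q ℝ × (Q → List (Fin 5))) :=
    (T.Vbeg, T.outBeg) :: u.map f with hL₁
  have hsteps : ∀ a : Fin 4, T.steps (u ++ [a]) = L₁ ++ [f a, (T.Vend, T.outEnd)] := by
    intro a
    rw [PFST.steps, hL₁]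
    simp [hf]
  -- positivity / stochasticity of the step lists
  have hposL₁ : ∀ s ∈ L₁, ∀ q p, 0 ≤ s.1 q p := by
    intro s hs
    rw [hL₁] at hs
    rcases List.mem_cons.1 hs with h | h
    · subst h; exact T.nonnegBeg
    · obtain ⟨a, -, rfl⟩ := List.mem_map.1 h
      exact T.nonneg a
  have hsumL₁ : ∀ s ∈ L₁, ∀ q, ∑ p : Q, s.1 q p = 1 := by
    intro s hs
    rw [hL₁] at hs
    rcases List.mem_cons.1 hs with h | h
    · subst h; exact T.stochasticBeg
    · obtain ⟨a, -, rfl⟩ := List.mem_map.1 h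
      exact T.stochastic a
  have hposL₂ : ∀ a : Fin 4, ∀ s ∈ [f a, (T.Vend, T.outEnd)], ∀ q p, 0 ≤ s.1 q p := by
    intro a s hs
    rcases List.mem_cons.1 hs with h | h
    · subst h; exact T.nonneg a
    · rcases List.mem_cons.1 h with h' | h'
      · subst h'; exact T.nonnegEnd
      · simp at h'
  have hsumL₂ : ∀ a : Fin 4, ∀ s ∈ [f a, (T.Vend, T.outEnd)], ∀ q, ∑ p : Q, s.1 q p = 1 := by
    intro a s hs
    rcases List.mem_cons.1 hs with h | h
    · subst h; exact T.stochastic a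
    · rcases List.mem_cons.1 h with h' | h'
      · subst h'; exact T.stochasticEnd
      · simp at h'
  have houtL₂ : ∀ s ∈ [f 3, (T.Vend, T.outEnd)], ∀ q, (s.2 q).length ≤ B := by
    intro s hs q
    rcases List.mem_cons.1 hs with h | h
    · subst h
      have hgoal : (T.out 3 q).length
          ≤ Finset.univ.sup (fun q : Q => max (T.out 3 q).length (T.outEnd q).length) :=
        le_trans (le_max_left _ _) (Finset.le_sup (f := fun q : Q => max (T.out 3 q).length (T.outEnd q).length) (Finset.mem_univ q))
      exact hgoal
    · rcases List.mem_cons.1 h with h' | h'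
      · subst h'
        have hgoal : (T.outEnd q).length
            ≤ Finset.univ.sup (fun q : Q => max (T.out 3 q).length (T.outEnd q).length) :=
          le_trans (le_max_right _ _) (Finset.le_sup (f := fun q : Q => max (T.out 3 q).length (T.outEnd q).length) (Finset.mem_univ q))
        exact hgoal
      · simp at h'
  -- membership facts
  have hm2 : ((u ++ [2] : List (Fin 4)), ([] : List (Fin 5))) ∈ R₄ :=
    ⟨0, n, 0, 2, Or.inl rfl, fun _ => rfl, fun h => absurd h (by decide), by simp [hu], rfl⟩
  have hm3 : ((u ++ [3] : List (Fin 4)), List.replicate n (4 : Fin 5)) ∈ R₄ :=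
    ⟨0, n, n, 3, Or.inr rfl, fun h => absurd h (by decide), fun _ => rfl, by simp [hu], rfl⟩
  have h2 := (hcomp (u ++ [2]) []).1 hm2
  have h3 := (hcomp (u ++ [3]) (List.replicate n 4)).1 hm3
  simp only [PFST.prob] at h2 h3
  rw [← hnon, hsteps 2, pAccAux_append] at h2
  rw [← hnon, hsteps 3, pAccAux_append] at h3
  set G : ℕ → ℝ := fun k => ∑ p : Q, runAux non L₁ T.init p (List.replicate k (4 : Fin 5))
    with hG
  have hG0 : G 0 = ∑ p : Q, runAux non L₁ T.init p [] := by simp [hG]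
  have hrunpos : ∀ p w', 0 ≤ runAux non L₁ T.init p w' :=
    fun p w' => runAux_nonneg non L₁ hposL₁ T.init p w'
  -- bound h2
  have hb2 : (1:ℝ)/2 + δ ≤ pAccAux T.acc non L₁ T.init [] + G 0 := by
    simp only [List.length_nil, Nat.zero_add, Finset.sum_range_one, List.take_nil,
      List.drop_nil] at h2
    refine le_trans h2 (add_le_add_right ?_ _)
    rw [hG0]
    refine Finset.sum_le_sum fun p _ => ?_
    calc runAux non L₁ T.init p [] * pAccAux T.acc non [f 2, (T.Vend, T.outEnd)] p []
        ≤ runAux non L₁ T.init p [] * 1 :=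
          mul_le_mul_of_nonneg_left
            (pAccAux_le_one T.acc non hdisj _ (hposL₂ 2) (hsumL₂ 2) p []) (hrunpos p [])
      _ = runAux non L₁ T.init p [] := mul_one _
  -- bound h3
  have hb3 : (1:ℝ)/2 + δ ≤ pAccAux T.acc non L₁ T.init (List.replicate n 4)
      + ∑ k ∈ Finset.range (n + 1), (if k = 0 then 0 else G k) := by
    simp only [List.length_replicate] at h3
    refine le_trans h3 (add_le_add_right (Finset.sum_le_sum fun k hk => ?_) _)
    by_cases hk0 : k = 0
    · subst hk0
      rw [if_pos rfl]
      have hz : ∀ p : Q, pAccAux T.acc non [f 3, (T.Vend, T.outEnd)] p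
          ((List.replicate n (4 : Fin 5)).drop 0) = 0 := by
        intro p
        refine pAccAux_eq_zero_of_long T.acc non B _ houtL₂ p _ ?_
        simp only [List.drop_zero, List.length_replicate, List.length_cons,
          List.length_nil, hn]
        omega
      have : (∑ p : Q, runAux non L₁ T.init p ((List.replicate n (4 : Fin 5)).take 0)
          * pAccAux T.acc non [f 3, (T.Vend, T.outEnd)] p
            ((List.replicate n (4 : Fin 5)).drop 0)) = 0 :=
        Finset.sum_eq_zero fun p _ => by rw [hz p, mul_zero]
      exact le_of_eq this
    · rw [if_neg hk0]
      have hkn : k ≤ n := Nat.lt_succ_iff.mp (Finset.mem_range.1 hk)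
      have htake : (List.replicate n (4 : Fin 5)).take k = List.replicate k 4 := by
        rw [List.take_replicate]
        congr 1
        omega
      rw [htake, hG]
      refine Finset.sum_le_sum fun p _ => ?_
      calc runAux non L₁ T.init p (List.replicate k 4)
            * pAccAux T.acc non [f 3, (T.Vend, T.outEnd)] p ((List.replicate n (4:Fin 5)).drop k)
          ≤ runAux non L₁ T.init p (List.replicate k 4) * 1 :=
            mul_le_mul_of_nonneg_left
              (pAccAux_le_one T.acc non hdisj _ (hposL₂ 3) (hsumL₂ 3) p _) (hrunpos p _)
        _ = runAux non L₁ T.init p (List.replicate k 4) := mul_one _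
  -- total mass bound
  set W : Finset (List (Fin 5)) := {[], List.replicate n 4} with hW
  set U : Finset (List (Fin 5)) :=
    (Finset.range (n + 1)).image (fun k => List.replicate k (4 : Fin 5)) with hU
  have hmass := mass_le_one T.acc non hdisj L₁ hposL₁ hsumL₁ T.init W U
  have hWsum : (∑ w ∈ W, pAccAux T.acc non L₁ T.init w)
      = pAccAux T.acc non L₁ T.init [] + pAccAux T.acc non L₁ T.init (List.replicate n 4) := by
    rw [hW]
    refine Finset.sum_pair ?_
    intro h
    have := congrArg List.length h
    simp [hn] at this
  have hUsum : (∑ u' ∈ U, ∑ p : Q, runAux non L₁ T.init p u')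
      = ∑ k ∈ Finset.range (n + 1), G k := by
    rw [hU, Finset.sum_image]
    intro a _ b _ hab
    have := congrArg List.length hab
    simpa using this
  rw [hWsum, hUsum] at hmass
  have hsplit : (∑ k ∈ Finset.range (n + 1), (if k = 0 then (0:ℝ) else G k))
      = (∑ k ∈ Finset.range (n + 1), G k) - G 0 := by
    have h1 : ∀ k ∈ Finset.range (n + 1),
        (if k = 0 then (0:ℝ) else G k) = G k - (if k = 0 then G k else 0) := by
      intro k _
      by_cases h : k = 0 <;> simp [h]
    rw [Finset.sum_congr rfl h1, Finset.sum_sub_distrib,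
      Finset.sum_ite_eq' (Finset.range (n + 1)) 0 G,
      if_pos (Finset.mem_range.2 (Nat.succ_pos n))]
  rw [hsplit] at hb3
  linarith
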